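/- Let V : ℝⁿ → ℝ be C¹ with ⟨∇V(q), q⟩ ≥ μ₁V(q) − μ₂ for all q, where μ₁ > 0, μ₂ ≥ 0, and let h > μ₂/μ₁. Let (uₙ) be a sequence of C¹ 1-periodic functions uₙ : ℝ → ℝⁿ each satisfying the constraint ∫₀¹ [V(uₙ(t)) + (1/2)⟨∇V(uₙ(t)), uₙ(t)⟩] dt = h, and suppose the sequence f(uₙ) = (1/4)(∫₀¹ |u̇ₙ(t)|² dt)(∫₀¹ ⟨∇V(uₙ(t)), uₙ(t)⟩ dt) converges to some c ∈ ℝ. Then the sequence ∫₀¹ |u̇ₙ(t)|² dt is bounded. -/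

import Mathlib

open Filter MeasureTheory Set
open scoped RealInnerProductSpace

/-!
Write `A = ∫₀¹ ⟨∇V(u), u⟩`. Integrating `V(q) ≤ (⟨∇V(q), q⟩ + μ₂) / μ₁` against the constraint
gives `h ≤ (A + μ₂) / μ₁ + A / 2`, so `A` is bounded below by a positive constant uniformly
along the sequence. Since the products `(1/4) (∫₀¹ |u̇|²) A` converge, they are bounded above,
and dividing by the lower bound for `A` bounds the Dirichlet integrals.
-/

theorem ContDiff.continuous_gradient {F : Type*} [NormedAddCommGroup F] [InnerProductSpace ℝ F]
    [CompleteSpace F] {V : F → ℝ} (hV : ContDiff ℝ 1 V) : Continuous (gradient V) :=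
  (InnerProductSpace.toDual ℝ _).symm.continuous.comp (hV.continuous_fderiv one_ne_zero)

theorem le_integral_of_integral_add_half_eq {α : Type*} [MeasurableSpace α] {μ : Measure α}
    [IsProbabilityMeasure μ] {f g : α → ℝ} (hf : Integrable f μ) (hg : Integrable g μ)
    {μ₁ μ₂ h : ℝ} (hμ₁ : 0 < μ₁) (hfg : ∀ x, μ₁ * f x - μ₂ ≤ g x)
    (hcon : ∫ x, (f x + 1 / 2 * g x) ∂μ = h) :
    (h - μ₂ / μ₁) / (1 / 2 + 1 / μ₁) ≤ ∫ x, g x ∂μ := by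
  have hsplit : ∫ x, (f x + 1 / 2 * g x) ∂μ = ∫ x, f x ∂μ + 1 / 2 * ∫ x, g x ∂μ := by
    rw [integral_add hf (hg.const_mul _), integral_const_mul]
  have hmono : μ₁ * ∫ x, f x ∂μ - μ₂ ≤ ∫ x, g x ∂μ := by
    have hint := (hf.const_mul μ₁).sub (integrable_const μ₂)
    calc μ₁ * ∫ x, f x ∂μ - μ₂ = ∫ x, (μ₁ * f x - μ₂) ∂μ := by
          rw [integral_sub (hf.const_mul μ₁) (integrable_const μ₂), integral_const_mul,
            integral_const, probReal_univ, one_smul]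
      _ ≤ ∫ x, g x ∂μ := integral_mono hint hg hfg
  have hdiv : ∫ x, f x ∂μ - μ₂ / μ₁ ≤ (∫ x, g x ∂μ) / μ₁ := by
    rw [sub_div' hμ₁.ne', mul_comm]
    exact div_le_div_of_nonneg_right hmono hμ₁.le
  rw [div_le_iff₀ (by positivity), ← hcon, hsplit]
  linarith [mul_add (∫ x, g x ∂μ) (1 / 2) (1 / μ₁), mul_one_div (∫ x, g x ∂μ) μ₁]

theorem dirichlet_integrals_bounded_general
    (n : ℕ) (V : EuclideanSpace ℝ (Fin n) → ℝ) (hV : ContDiff ℝ 1 V)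
    (μ₁ μ₂ : ℝ) (hμ₁ : 0 < μ₁)
    (hV4 : ∀ q, ⟪gradient V q, q⟫ ≥ μ₁ * V q - μ₂)
    (h : ℝ) (hh : μ₂ / μ₁ < h)
    (u : ℕ → ℝ → EuclideanSpace ℝ (Fin n))
    (hu : ∀ k, ContDiff ℝ 1 (u k))
    (hcon : ∀ k,
      ∫ t in (0:ℝ)..1, (V (u k t) + (1 / 2) * ⟪gradient V (u k t), u k t⟫) = h)
    (c : ℝ)
    (hf : Tendsto (fun k =>
      (1 / 4) * (∫ t in (0:ℝ)..1, ‖deriv (u k) t‖ ^ 2) *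
        (∫ t in (0:ℝ)..1, ⟪gradient V (u k t), u k t⟫)) atTop (nhds c)) :
    ∃ C : ℝ, ∀ k, ∫ t in (0:ℝ)..1, ‖deriv (u k) t‖ ^ 2 ≤ C := by
  set a := (h - μ₂ / μ₁) / (1 / 2 + 1 / μ₁)
  have ha : 0 < a := div_pos (sub_pos.mpr hh) (by positivity)
  have hA : ∀ k, a ≤ ∫ t in (0:ℝ)..1, ⟪gradient V (u k t), u k t⟫ := fun k => by
    have : IsProbabilityMeasure (volume.restrict (Ioc (0:ℝ) 1)) := ⟨by simp⟩
    have hcont := (hu k).continuous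
    have hcon' := hcon k
    rw [intervalIntegral.integral_of_le zero_le_one] at hcon' ⊢
    exact le_integral_of_integral_add_half_eq
      ((hV.continuous.comp hcont).integrableOn_Ioc)
      ((hV.continuous_gradient.comp hcont).inner hcont).integrableOn_Ioc
      hμ₁ (fun t => hV4 (u k t)) hcon'
  have hD : ∀ k, 0 ≤ ∫ t in (0:ℝ)..1, ‖deriv (u k) t‖ ^ 2 := fun k =>
    intervalIntegral.integral_nonneg zero_le_one fun t _ => by positivity
  obtain ⟨M, hM⟩ := hf.bddAbove_range
  refine ⟨4 * M / a, fun k => ?_⟩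
  rw [le_div_iff₀ ha]
  nlinarith [hA k, hD k, hM ⟨k, rfl⟩]

/-- Boundedness step of the Palais–Smale condition (Claim 3.1): if
`⟨∇V(q),q⟩ ≥ μ₁V(q) - μ₂`, `h > μ₂/μ₁`, each `uₖ` is a C¹ 1-periodic function
on the constraint `∫₀¹ [V(uₖ) + (1/2)⟨∇V(uₖ),uₖ⟩] dt = h`, and
`f(uₖ) = (1/4)(∫₀¹|u̇ₖ|²)(∫₀¹⟨∇V(uₖ),uₖ⟩)` converges, then the Dirichlet
integrals `∫₀¹ |u̇ₖ|² dt` are bounded. -/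
theorem dirichlet_integrals_bounded
    (n : ℕ) (V : EuclideanSpace ℝ (Fin n) → ℝ) (hV : ContDiff ℝ 1 V)
    (μ₁ μ₂ : ℝ) (hμ₁ : 0 < μ₁) (hμ₂ : 0 ≤ μ₂)
    (hV4 : ∀ q, ⟪gradient V q, q⟫ ≥ μ₁ * V q - μ₂)
    (h : ℝ) (hh : μ₂ / μ₁ < h)
    (u : ℕ → ℝ → EuclideanSpace ℝ (Fin n))
    (hu : ∀ k, ContDiff ℝ 1 (u k))
    (hper : ∀ k t, u k (t + 1) = u k t)
    (hcon : ∀ k,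
      ∫ t in (0:ℝ)..1, (V (u k t) + (1 / 2) * ⟪gradient V (u k t), u k t⟫) = h)
    (c : ℝ)
    (hf : Tendsto (fun k =>
      (1 / 4) * (∫ t in (0:ℝ)..1, ‖deriv (u k) t‖ ^ 2) *
        (∫ t in (0:ℝ)..1, ⟪gradient V (u k t), u k t⟫)) atTop (nhds c)) :
    ∃ C : ℝ, ∀ k, ∫ t in (0:ℝ)..1, ‖deriv (u k) t‖ ^ 2 ≤ C :=
  dirichlet_integrals_bounded_general n V hV μ₁ μ₂ hμ₁ hV4 h hh u hu hcon c hf
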